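/- Let A be a Hopf algebra, B a left coideal subalgebra, and δ a derivation of B. Then the set R_δ = { Σᵢ ε(aᵢ) bᵢ⁺ : Σᵢ aᵢ·δ(bᵢ) = 0 } is a right ideal of B⁺. -/
import Mathlib


open TensorProduct

noncomputable section

/-- A derivation of an algebra `B` into a `B`-bimodule `M`. -/
structure BimodDeriv (B M : Type) [Ring B] [Algebra ℂ B]
    [AddCommGroup M] [Module ℂ M] where
  l : B →ₗ[ℂ] M →ₗ[ℂ] M
  r : B →ₗ[ℂ] M →ₗ[ℂ] M
  l_mul : ∀ a b m, l (a * b) m = l a (l b m)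
  l_one : ∀ m, l 1 m = m
  r_mul : ∀ a b m, r (a * b) m = r b (r a m)
  r_one : ∀ m, r 1 m = m
  lr_comm : ∀ a b m, l a (r b m) = r b (l a m)
  d : B →ₗ[ℂ] M
  leibniz : ∀ a b, d (a * b) = l a (d b) + r b (d a)

variable (A : Type) [Ring A] [HopfAlgebra ℂ A] (B : Subalgebra ℂ A)

/-- The counit of `A` restricted to `B`. -/
def epsB : ↥B →ₐ[ℂ] ℂ := (Bialgebra.counitAlgHom ℂ A).comp B.val

/-- `B⁺ = B ∩ ker ε`. -/
def Bplus : Submodule ℂ ↥B := LinearMap.ker (epsB A B).toLinearMap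

/-- `b ↦ b⁺ = b − ε(b)1`. -/
def plusB : ↥B →ₗ[ℂ] ↥B :=
  LinearMap.id - (Algebra.linearMap ℂ ↥B).comp (epsB A B).toLinearMap

/-- `R_δ = { Σᵢ ε(aᵢ)bᵢ⁺ : Σᵢ aᵢ·δ(bᵢ) = 0 }`. -/
def RdeltaSet {M : Type} [AddCommGroup M] [Module ℂ M]
    (δ : BimodDeriv ↥B M) : Set ↥B :=
  {x | ∃ L : List (↥B × ↥B),
    (L.map fun p => δ.l p.1 (δ.d p.2)).sum = 0 ∧
    x = (L.map fun p => epsB A B p.1 • plusB A B p.2).sum}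


section Aux

variable (A : Type) [Ring A] [HopfAlgebra ℂ A] (B : Subalgebra ℂ A)

lemma eps_plusB (b : ↥B) : epsB A B (plusB A B b) = 0 := by
  simp [plusB, epsB]

lemma plusB_eq_of_eps (b : ↥B) (h : epsB A B b = 0) : plusB A B b = b := by
  simp [plusB, h]

lemma plusB_mul (d b : ↥B) (h : epsB A B b = 0) :
    plusB A B (d * b) = plusB A B d * b + epsB A B d • b := by
  simp [plusB, map_mul, h, sub_mul, Algebra.smul_def]

end Aux

/-- Theorem 1 (ii), first part: Let `A` be a Hopf algebra, `B` a
left coideal subalgebra and `δ` a derivation of `B`.  Then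
`R_δ = { Σᵢ ε(aᵢ)bᵢ⁺ : Σᵢ aᵢ·δ(bᵢ) = 0 }` is a right ideal of `B⁺`:
it is contained in `B⁺`, closed under addition and scalar multiplication
(and contains `0`), and closed under right multiplication by elements
of `B⁺`. -/
theorem Rdelta_is_right_ideal_of_Bplus
    (comulB : ↥B →ₗ[ℂ] A ⊗[ℂ] ↥B)
    (hcomulB : ∀ b : ↥B,
      (TensorProduct.map LinearMap.id B.val.toLinearMap) (comulB b)
        = Coalgebra.comul (b : A))
    {M : Type} [AddCommGroup M] [Module ℂ M]
    (δ : BimodDeriv ↥B M) :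
    ((0 : ↥B) ∈ RdeltaSet A B δ) ∧
    (∀ x ∈ RdeltaSet A B δ, x ∈ Bplus A B) ∧
    (∀ x ∈ RdeltaSet A B δ, ∀ y ∈ RdeltaSet A B δ, x + y ∈ RdeltaSet A B δ) ∧
    (∀ c : ℂ, ∀ x ∈ RdeltaSet A B δ, c • x ∈ RdeltaSet A B δ) ∧
    (∀ x ∈ RdeltaSet A B δ, ∀ b ∈ Bplus A B, x * b ∈ RdeltaSet A B δ) := by
  refine ⟨⟨[], by simp, by simp⟩, ?_, ?_, ?_, ?_⟩
  · -- contained in B⁺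
    rintro x ⟨L, hL, rfl⟩
    have : epsB A B ((L.map fun p => epsB A B p.1 • plusB A B p.2).sum) = 0 := by
      rw [← List.sum_map_hom]
      apply List.sum_eq_zero
      intro y hy
      simp only [List.mem_map] at hy
      obtain ⟨p, _, rfl⟩ := hy
      simp [eps_plusB]
    exact this
  · -- addition
    rintro x ⟨L1, h1, rfl⟩ y ⟨L2, h2, rfl⟩
    exact ⟨L1 ++ L2, by simp [h1, h2], by simp⟩
  · -- scalar multiplication
    rintro c x ⟨L, hL, rfl⟩
    refine ⟨L.map fun p => (c • p.1, p.2), ?_, ?_⟩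
    · rw [List.map_map]
      have : ((fun p : ↥B × ↥B => δ.l p.1 (δ.d p.2)) ∘
          fun p : ↥B × ↥B => (c • p.1, p.2)) =
          (fun m => c • m) ∘ fun p : ↥B × ↥B => δ.l p.1 (δ.d p.2) := by
        funext p; simp
      rw [this, ← List.map_map, ← List.smul_sum, hL, smul_zero]
    · rw [List.map_map]
      have : ((fun p : ↥B × ↥B => epsB A B p.1 • plusB A B p.2) ∘
          fun p : ↥B × ↥B => (c • p.1, p.2)) =
          (fun m => c • m) ∘ fun p : ↥B × ↥B => epsB A B p.1 • plusB A B p.2 := by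
        funext p; simp [mul_smul]
      rw [this, ← List.map_map, ← List.smul_sum]
  · -- right multiplication by b ∈ B⁺
    rintro x ⟨L, hL, rfl⟩ b hb
    have hb' : epsB A B b = 0 := hb
    set c : ↥B := (L.map fun p => p.1 * p.2).sum with hc
    refine ⟨(L.map fun p => (p.1, p.2 * b)) ++ [(-c, b)], ?_, ?_⟩
    · rw [List.map_append, List.sum_append, List.map_map]
      have key : ∀ L' : List (↥B × ↥B),
          (L'.map fun p => δ.l p.1 (δ.d (p.2 * b))).sum
            = δ.l ((L'.map fun p => p.1 * p.2).sum) (δ.d b)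
              + δ.r b ((L'.map fun p => δ.l p.1 (δ.d p.2)).sum) := by
        intro L'
        induction L' with
        | nil => simp
        | cons q t ih =>
          simp only [List.map_cons, List.sum_cons, ih, map_add,
            LinearMap.add_apply]
          rw [δ.leibniz, map_add, δ.lr_comm, ← δ.l_mul]
          abel
      have : ((fun p : ↥B × ↥B => δ.l p.1 (δ.d p.2)) ∘
          fun p : ↥B × ↥B => (p.1, p.2 * b)) =
          fun p : ↥B × ↥B => δ.l p.1 (δ.d (p.2 * b)) := rfl
      rw [this, key L, hL, map_zero, add_zero]
      simp [← hc]
    · rw [List.map_append, List.sum_append]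
      have hplusb : plusB A B b = b := plusB_eq_of_eps A B b hb'
      have key : ∀ L' : List (↥B × ↥B),
          ((L'.map fun p => (p.1, p.2 * b)).map
              fun p => epsB A B p.1 • plusB A B p.2).sum
            = ((L'.map fun p => epsB A B p.1 • plusB A B p.2).sum) * b
              + epsB A B ((L'.map fun p => p.1 * p.2).sum) • b := by
        intro L'
        induction L' with
        | nil => simp
        | cons q t ih =>
          simp only [List.map_cons, List.sum_cons, ih,
            plusB_mul A B q.2 b hb', map_add, map_mul, add_mul, smul_add,
            smul_smul, add_smul, smul_mul_assoc]
          abel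
      rw [key L]
      simp only [List.map_cons, List.map_nil, List.sum_cons, List.sum_nil,
        add_zero, map_neg, neg_smul, hplusb, ← hc]
      abel

end
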